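/- Let L ⊆ ℤⁿ be a zonotopal lattice, let (·,·) be a weighted inner product on ℝⁿ, let F = span_ℝ(L), and let π : ℝⁿ → F be the orthogonal projection onto F with respect to (·,·). Then the Dirichlet–Voronoi polytope of L satisfies DV(L) = π([−1/2, 1/2]ⁿ); in particular DV(L) is a zonotope, namely the image under π of the cube [−1/2, 1/2]ⁿ. -/

import Mathlib

/-- The support of an integer vector: the set of its nonzero coordinates. -/
def supp {n : ℕ} (v : Fin n → ℤ) : Set (Fin n) := {i | v i ≠ 0}

/-- `v` is an elementary vector of the lattice `L ⊆ ℤⁿ`: it is a nonzero lattice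
vector with entries in `{-1,0,+1}` whose support is minimal among supports of
nonzero lattice vectors. -/
def IsElementary {n : ℕ} (L : AddSubgroup (Fin n → ℤ)) (v : Fin n → ℤ) : Prop :=
  v ∈ L ∧ v ≠ 0 ∧ (∀ i, v i = -1 ∨ v i = 0 ∨ v i = 1) ∧
    ∀ u ∈ L, u ≠ 0 → ¬ (supp u ⊂ supp v)

/-- A lattice `L ⊆ ℤⁿ` is zonotopal if every nonzero lattice vector's support
contains the support of some elementary vector. -/
def IsZonotopal {n : ℕ} (L : AddSubgroup (Fin n → ℤ)) : Prop :=
  ∀ v ∈ L, v ≠ 0 → ∃ u, IsElementary L u ∧ supp u ⊆ supp v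

/-- The weighted inner product on `ℝⁿ` with weights `lam`. -/
def wip {n : ℕ} (lam : Fin n → ℝ) (x y : Fin n → ℝ) : ℝ := ∑ i, lam i * x i * y i

/-- Coordinatewise cast of an integer vector to a real vector. -/
def icast {n : ℕ} (v : Fin n → ℤ) : Fin n → ℝ := fun i => (v i : ℝ)

/-- The real span `F` of a lattice `L ⊆ ℤⁿ`. -/
def latticeSpan {n : ℕ} (L : AddSubgroup (Fin n → ℤ)) : Submodule ℝ (Fin n → ℝ) :=
  Submodule.span ℝ (icast '' (L : Set (Fin n → ℤ)))

/-- The Dirichlet-Voronoi polytope of a lattice `L ⊆ ℤⁿ` with respect to the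
weighted inner product with weights `lam`. -/
def DV {n : ℕ} (L : AddSubgroup (Fin n → ℤ)) (lam : Fin n → ℝ) : Set (Fin n → ℝ) :=
  {x | x ∈ latticeSpan L ∧
    ∀ v ∈ L, wip lam x (icast v) ≤ wip lam (icast v) (icast v) / 2}

/-- `v` is a strict Voronoi vector of `L` with respect to the weighted inner
product with weights `lam`: `±v` are the unique shortest vectors of `v + 2L`. -/
def IsStrictVoronoi {n : ℕ} (L : AddSubgroup (Fin n → ℤ)) (lam : Fin n → ℝ)
    (v : Fin n → ℤ) : Prop :=
  v ∈ L ∧ v ≠ 0 ∧ ∀ w ∈ L, v + 2 • w ≠ v → v + 2 • w ≠ -v →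
    wip lam (icast v) (icast v) <
      wip lam (icast (v + 2 • w)) (icast (v + 2 • w))

/-- Two integer vectors are conformal if their entries never have opposite signs. -/
def IsConformal {n : ℕ} (v w : Fin n → ℤ) : Prop := ∀ i, 0 ≤ v i * w i

/-- The sign of a real number, as an integer in `{-1,0,+1}`. -/
noncomputable def sgnR (t : ℝ) : ℤ := if 0 < t then 1 else if t < 0 then -1 else 0

/-- A covector of the vector configuration `X`: the sign vector of the values of a
linear functional on the configuration. -/
def IsCovector {n d : ℕ} (X : Fin n → Fin d → ℝ) (s : Fin n → ℤ) : Prop :=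
  ∃ f : (Fin d → ℝ) →ₗ[ℝ] ℝ, ∀ i, s i = sgnR (f (X i))

/-- A cocircuit of the vector configuration `X`: a nonzero covector of minimal support. -/
def IsCocircuit {n d : ℕ} (X : Fin n → Fin d → ℝ) (s : Fin n → ℤ) : Prop :=
  IsCovector X s ∧ s ≠ 0 ∧ ∀ t, IsCovector X t → t ≠ 0 → ¬ (supp t ⊂ supp s)

/-- The lattice in `ℤⁿ` generated by the cocircuits of `X`. -/
def cocircuitLattice {n d : ℕ} (X : Fin n → Fin d → ℝ) : AddSubgroup (Fin n → ℤ) :=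
  AddSubgroup.closure {s | IsCocircuit X s}

/-- A linear subspace of `ℝ^d` spanned by a subset of the configuration `X`. -/
def SpannedSubspace {n d : ℕ} (X : Fin n → Fin d → ℝ)
    (W : Submodule ℝ (Fin d → ℝ)) : Prop :=
  ∃ S : Set (Fin n), W = Submodule.span ℝ (X '' S)

/-- McMullen's condition (II): every `(d-2)`-dimensional subspace spanned by vectors
of `X` is contained in exactly `2` or `3` hyperplanes spanned by vectors of `X`. -/
def ConditionII {n d : ℕ} (X : Fin n → Fin d → ℝ) : Prop :=
  ∀ W : Submodule ℝ (Fin d → ℝ), SpannedSubspace X W → Module.finrank ℝ W = d - 2 →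
    {H : Submodule ℝ (Fin d → ℝ) |
        SpannedSubspace X H ∧ Module.finrank ℝ H = d - 1 ∧ W ≤ H}.ncard = 2 ∨
    {H : Submodule ℝ (Fin d → ℝ) |
        SpannedSubspace X H ∧ Module.finrank ℝ H = d - 1 ∧ W ≤ H}.ncard = 3

/-- The zonotope generated by the vector configuration `X`, i.e. the Minkowski sum
of the segments `conv{xᵢ, -xᵢ}`. -/
def zonotope {n d : ℕ} (X : Fin n → Fin d → ℝ) : Set (Fin d → ℝ) :=
  {z | ∃ c : Fin n → ℝ, (∀ i, |c i| ≤ 1) ∧ z = ∑ i, c i • X i}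

/-- `P` tiles `ℝ^d` face-to-face by translations: some family of translates of `P`
covers `ℝ^d`, and any two distinct translates intersect in a common (possibly empty)
exposed face. -/
def TilesFaceToFace {d : ℕ} (P : Set (Fin d → ℝ)) : Prop :=
  ∃ T : Set (Fin d → ℝ),
    (∀ x, ∃ t ∈ T, x ∈ (t + ·) '' P) ∧
    ∀ s ∈ T, ∀ t ∈ T, s ≠ t →
      IsExposed ℝ ((s + ·) '' P) (((s + ·) '' P) ∩ ((t + ·) '' P)) ∧
      IsExposed ℝ ((t + ·) '' P) (((s + ·) '' P) ∩ ((t + ·) '' P))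

/-!
The support function of `π([-1/2, 1/2]ⁿ)` in a direction `p ∈ F` is `h(p) = ½ ∑ λᵢ |pᵢ|`, so by
Hahn–Banach `π([-1/2, 1/2]ⁿ) = {x ∈ F | (x, p) ≤ h(p) for all p ∈ F}`. For integer vectors
`h(v) ≤ ½ (v, v)`, with equality on `{-1, 0, 1}`-vectors, so this set lies in `DV(L)`.
Conversely, in a zonotopal lattice every nonzero `v` has an elementary vector `e` conformal to it
with `supp e ⊆ supp v`, and then `h(v) = h(e) + h(v - e)`; induction on `∑ |vᵢ|` gives
`(x, v) ≤ h(v)` for `x ∈ DV(L)` and `v ∈ L`, and this extends to all of `F` by homogeneity and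
continuity, since the vectors with a positive integer multiple in `L` are dense in `F`.
-/

open Finset

section Conformal

variable {n : ℕ}

lemma supp_neg (v : Fin n → ℤ) : supp (-v) = supp v := by
  ext i; simp [supp]

lemma IsElementary.neg {L : AddSubgroup (Fin n → ℤ)} {v : Fin n → ℤ} (h : IsElementary L v) :
    IsElementary L (-v) := by
  obtain ⟨hvL, hv0, hsign, hmin⟩ := h
  refine ⟨neg_mem hvL, neg_ne_zero.2 hv0, fun i => ?_, by simpa [supp_neg] using hmin⟩
  rcases hsign i with h | h | h <;> simp [h]

lemma IsConformal.trans {e w v : Fin n → ℤ} (hew : IsConformal e w) (hwv : IsConformal w v)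
    (hsupp : supp e ⊆ supp w) : IsConformal e v := by
  intro i
  by_cases hei : e i = 0
  · simp [hei]
  have hwi : w i ≠ 0 := hsupp hei
  nlinarith [hew i, hwv i, mul_self_pos.2 hwi]

lemma exists_add_smul_conformal {e v : Fin n → ℤ} (he : ∀ i, e i = -1 ∨ e i = 0 ∨ e i = 1)
    (hsupp : supp e ⊆ supp v) (hneg : ¬ IsConformal e v) (hpos : ¬ IsConformal (-e) v) :
    ∃ t : ℤ, v + t • e ≠ 0 ∧ supp (v + t • e) ⊂ supp v ∧ IsConformal (v + t • e) v := by
  obtain ⟨i₀, hi₀⟩ : ∃ i, 0 < e i * v i := by simpa [IsConformal] using hpos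
  -- Adding `|v j| • e` clears coordinate `j` without flipping the sign of any coordinate of `v`,
  -- since `|v j|` is minimal among the coordinates where `e` and `v` disagree in sign.
  obtain ⟨j, hj, hjmin⟩ := (univ.filter fun i => e i * v i < 0).exists_min_image (fun i => |v i|)
    (by simpa [IsConformal, Finset.Nonempty] using hneg)
  simp only [mem_filter, mem_univ, true_and] at hj hjmin
  have hv : ∀ i, v i = 0 → e i = 0 := fun i hvi => by_contra fun hei => hsupp hei hvi
  have hcoord : ∀ i, (v + |v j| • e) i = v i + |v j| * e i := fun i => by simp
  have hconf : ∀ i, 0 ≤ (v i + |v j| * e i) * v i := fun i => by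
    by_cases hlt : e i * v i < 0
    · have := hjmin i hlt
      rcases he i with h | h | h <;> rw [h] at hlt ⊢ <;> cases abs_cases (v i) <;>
        cases abs_cases (v j) <;> nlinarith
    · nlinarith [mul_nonneg (abs_nonneg (v j)) (not_lt.1 hlt), mul_self_nonneg (v i)]
  refine ⟨|v j|, fun h0 => ?_, ⟨fun i hi => ?_, fun h => ?_⟩, fun i => ?_⟩
  · have := congrFun h0 i₀
    rw [hcoord, Pi.zero_apply] at this
    rcases he i₀ with h | h | h <;> rw [h] at hi₀ this <;> cases abs_cases (v j) <;> linarith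
  · intro hvi
    exact hi (by rw [hcoord, hvi, hv i hvi]; ring)
  · apply h (show j ∈ supp v from fun hvj => by simp [hvj] at hj)
    show (v + |v j| • e) j = 0
    rw [hcoord]
    rcases he j with h | h | h <;> rw [h] at hj ⊢ <;> cases abs_cases (v j) <;> linarith
  · rw [hcoord]; exact hconf i

theorem IsZonotopal.exists_conformal_elementary {L : AddSubgroup (Fin n → ℤ)}
    (hL : IsZonotopal L) {v : Fin n → ℤ} (hv : v ∈ L) (hv0 : v ≠ 0) :
    ∃ e, IsElementary L e ∧ supp e ⊆ supp v ∧ IsConformal e v := by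
  induction hN : (supp v).ncard using Nat.strong_induction_on generalizing v with
  | _ N ih =>
  obtain ⟨e, he, hsupp⟩ := hL v hv hv0
  by_cases hconf : IsConformal e v
  · exact ⟨e, he, hsupp, hconf⟩
  by_cases hconf' : IsConformal (-e) v
  · exact ⟨-e, he.neg, by rwa [supp_neg], hconf'⟩
  obtain ⟨t, hw0, hwv, hwconf⟩ := exists_add_smul_conformal he.2.2.1 hsupp hconf hconf'
  obtain ⟨e', he', hsupp', hconf''⟩ :=
    ih _ (hN ▸ Set.ncard_lt_ncard hwv (Set.toFinite _)) (add_mem hv (zsmul_mem he.1 t)) hw0 rfl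
  exact ⟨e', he', hsupp'.trans hwv.subset, hconf''.trans hwconf hsupp'⟩

lemma natAbs_eq_natAbs_add_natAbs_sub {e v : Fin n → ℤ}
    (he : ∀ i, e i = -1 ∨ e i = 0 ∨ e i = 1) (hsupp : supp e ⊆ supp v) (hconf : IsConformal e v)
    (i : Fin n) : (v i).natAbs = (e i).natAbs + ((v - e) i).natAbs := by
  have hv : e i ≠ 0 → v i ≠ 0 := fun hei => hsupp hei
  have := hconf i
  rw [Pi.sub_apply]
  rcases he i with h | h | h <;> rw [h] at hv this ⊢ <;> omega

end Conformal

section WeightedInnerProduct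

variable {n : ℕ}

lemma wip_comm (lam x y : Fin n → ℝ) : wip lam x y = wip lam y x := by
  simp only [wip, mul_right_comm]

lemma wip_sub_left (lam x y z : Fin n → ℝ) : wip lam (x - y) z = wip lam x z - wip lam y z := by
  simp only [wip, Pi.sub_apply, mul_sub, sub_mul, sum_sub_distrib]

lemma wip_add_right (lam x y z : Fin n → ℝ) : wip lam x (y + z) = wip lam x y + wip lam x z := by
  simp only [wip, Pi.add_apply, mul_add, sum_add_distrib]

lemma wip_smul_right (lam x y : Fin n → ℝ) (c : ℝ) : wip lam x (c • y) = c * wip lam x y := by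
  simp only [wip, Pi.smul_apply, smul_eq_mul, mul_sum]
  exact sum_congr rfl fun i _ => by ring

lemma continuous_wip_right (lam x : Fin n → ℝ) : Continuous (wip lam x) := by
  unfold wip; fun_prop

lemma exists_wip_eq {lam : Fin n → ℝ} (hlam : ∀ i, lam i ≠ 0) (f : (Fin n → ℝ) →ₗ[ℝ] ℝ) :
    ∃ w, ∀ y, f y = wip lam w y := by
  refine ⟨fun i => f (fun j => if i = j then 1 else 0) / lam i, fun y => ?_⟩
  rw [LinearMap.pi_apply_eq_sum_univ f y]
  exact sum_congr rfl fun i _ => by field_simp [hlam i]; ring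

end WeightedInnerProduct

section CubeSupportFun

variable {n : ℕ}

/-- The support function `p ↦ max {wip lam z p : z ∈ [-1/2, 1/2]ⁿ}` of the cube. -/
noncomputable def cubeSupportFun (lam p : Fin n → ℝ) : ℝ := ∑ i, lam i * |p i| / 2

lemma cube_eq_closedBall : {z : Fin n → ℝ | ∀ i, |z i| ≤ 1 / 2} = Metric.closedBall 0 (1 / 2) := by
  ext z
  simp [pi_norm_le_iff_of_nonneg, Real.norm_eq_abs]

lemma continuous_cubeSupportFun (lam : Fin n → ℝ) : Continuous (cubeSupportFun lam) := by
  unfold cubeSupportFun; fun_prop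

lemma cubeSupportFun_smul (lam p : Fin n → ℝ) {c : ℝ} (hc : 0 ≤ c) :
    cubeSupportFun lam (c • p) = c * cubeSupportFun lam p := by
  simp only [cubeSupportFun, Pi.smul_apply, smul_eq_mul, abs_mul, abs_of_nonneg hc, mul_sum]
  exact sum_congr rfl fun i _ => by ring

lemma wip_le_cubeSupportFun_of_mem_cube {lam : Fin n → ℝ} (hlam : ∀ i, 0 ≤ lam i) {z : Fin n → ℝ}
    (hz : ∀ i, |z i| ≤ 1 / 2) (p : Fin n → ℝ) : wip lam z p ≤ cubeSupportFun lam p := by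
  refine sum_le_sum fun i _ => ?_
  rw [mul_assoc, mul_div_assoc]
  refine mul_le_mul_of_nonneg_left ?_ (hlam i)
  calc z i * p i ≤ |z i| * |p i| := abs_mul (z i) (p i) ▸ le_abs_self _
    _ ≤ 1 / 2 * |p i| := mul_le_mul_of_nonneg_right (hz i) (abs_nonneg _)
    _ = |p i| / 2 := by ring

lemma abs_sign_div_two_le (t : ℝ) : |(SignType.sign t : ℝ) / 2| ≤ 1 / 2 := by
  rw [abs_div, abs_two]
  gcongr
  rcases lt_trichotomy t 0 with h | h | h <;> simp [h]

lemma wip_sign_div_two (lam p : Fin n → ℝ) :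
    wip lam (fun i => SignType.sign (p i) / 2) p = cubeSupportFun lam p :=
  sum_congr rfl fun i _ => by rw [← self_mul_sign]; ring

lemma cubeSupportFun_icast_le {lam : Fin n → ℝ} (hlam : ∀ i, 0 ≤ lam i) (v : Fin n → ℤ) :
    cubeSupportFun lam (icast v) ≤ wip lam (icast v) (icast v) / 2 := by
  rw [wip, sum_div]
  refine sum_le_sum fun i _ => ?_
  rw [mul_assoc, mul_div_assoc, mul_div_assoc]
  refine mul_le_mul_of_nonneg_left ?_ (hlam i)
  have : |(v i : ℝ)| ≤ (v i : ℝ) * v i := by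
    rw [← Int.cast_abs, ← Int.cast_mul, Int.cast_le]
    rcases eq_or_ne (v i) 0 with h | h
    · simp [h]
    · rw [← abs_mul_abs_self]; exact le_mul_of_one_le_left (abs_nonneg _) (Int.one_le_abs h)
  exact div_le_div_of_nonneg_right this zero_le_two

lemma cubeSupportFun_icast_eq_wip {lam : Fin n → ℝ} {e : Fin n → ℤ}
    (he : ∀ i, e i = -1 ∨ e i = 0 ∨ e i = 1) :
    cubeSupportFun lam (icast e) = wip lam (icast e) (icast e) / 2 := by
  rw [wip, sum_div]
  exact sum_congr rfl fun i _ => by rcases he i with h | h | h <;> simp [icast, h]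

lemma cubeSupportFun_icast_eq_add {lam : Fin n → ℝ} {u v w : Fin n → ℤ}
    (h : ∀ i, (u i).natAbs = (v i).natAbs + (w i).natAbs) :
    cubeSupportFun lam (icast u) = cubeSupportFun lam (icast v) + cubeSupportFun lam (icast w) := by
  rw [cubeSupportFun, cubeSupportFun, cubeSupportFun, ← sum_add_distrib]
  refine sum_congr rfl fun i _ => ?_
  have := congrArg (Nat.cast : ℕ → ℝ) (h i)
  push_cast [Nat.cast_natAbs, Int.cast_abs] at this
  simp only [icast, this]
  ring

end CubeSupportFun

section Projection

variable {n : ℕ} {lam : Fin n → ℝ} {F : Submodule ℝ (Fin n → ℝ)}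
  {proj : (Fin n → ℝ) →ₗ[ℝ] (Fin n → ℝ)}

structure IsWipOrthogonalProjection (lam : Fin n → ℝ) (F : Submodule ℝ (Fin n → ℝ))
    (proj : (Fin n → ℝ) →ₗ[ℝ] (Fin n → ℝ)) : Prop where
  mem : ∀ z, proj z ∈ F
  wip_sub_eq_zero : ∀ z, ∀ w ∈ F, wip lam (z - proj z) w = 0

namespace IsWipOrthogonalProjection

lemma wip_apply_left (hP : IsWipOrthogonalProjection lam F proj) (z : Fin n → ℝ)
    {w : Fin n → ℝ} (hw : w ∈ F) : wip lam (proj z) w = wip lam z w := by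
  linarith [wip_sub_left lam z (proj z) w, hP.wip_sub_eq_zero z w hw]

lemma wip_apply_right (hP : IsWipOrthogonalProjection lam F proj) (w z : Fin n → ℝ) :
    wip lam w (proj z) = wip lam (proj w) z := by
  rw [← hP.wip_apply_left w (hP.mem z), wip_comm, hP.wip_apply_left z (hP.mem w), wip_comm]

theorem image_cube_eq (hP : IsWipOrthogonalProjection lam F proj) (hlam : ∀ i, 0 < lam i) :
    proj '' {z | ∀ i, |z i| ≤ 1 / 2} =
      {x | x ∈ F ∧ ∀ p ∈ F, wip lam x p ≤ cubeSupportFun lam p} := by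
  refine Set.Subset.antisymm ?_ fun x ⟨hxF, hx⟩ => ?_
  · rintro _ ⟨z, hz, rfl⟩
    exact ⟨hP.mem z, fun p hp => (hP.wip_apply_left z hp).trans_le
      (wip_le_cubeSupportFun_of_mem_cube (fun i => (hlam i).le) hz p)⟩
  by_contra hxK
  rw [cube_eq_closedBall] at hxK
  obtain ⟨f, u, hfK, hfx⟩ := geometric_hahn_banach_closed_point
    ((convex_closedBall _ _).linear_image proj)
    ((isCompact_closedBall _ _).image proj.continuous_of_finiteDimensional).isClosed hxK
  obtain ⟨w, hw⟩ : ∃ w, ∀ y, f y = wip lam w y :=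
    exists_wip_eq (fun i => (hlam i).ne') f.toLinearMap
  have hsign : cubeSupportFun lam (proj w) < u := by
    have := hfK _ ⟨fun i => SignType.sign (proj w i) / 2,
      cube_eq_closedBall ▸ fun i => abs_sign_div_two_le _, rfl⟩
    rwa [hw, hP.wip_apply_right, wip_comm, wip_sign_div_two] at this
  have hxw : u < wip lam x (proj w) := by
    rwa [hw, ← hP.wip_apply_left w hxF, wip_comm] at hfx
  linarith [hx _ (hP.mem w)]

end IsWipOrthogonalProjection

end Projection

theorem span_real_subset_closure_nsmul_mem {E : Type*} [AddCommGroup E] [Module ℝ E]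
    [TopologicalSpace E] [ContinuousAdd E] [ContinuousSMul ℝ E] (S : AddSubgroup E) :
    (Submodule.span ℝ (S : Set E) : Set E) ⊆ closure {v | ∃ N : ℕ, 0 < N ∧ N • v ∈ S} := by
  intro u hu
  obtain ⟨k, c, s, rfl⟩ := Submodule.mem_span_set'.1 hu
  let D : AddSubmonoid E :=
    { carrier := {v | ∃ N : ℕ, 0 < N ∧ N • v ∈ S}
      zero_mem' := ⟨1, one_pos, by simp⟩
      add_mem' := fun {a b} ⟨N, hN, ha⟩ ⟨M, hM, hb⟩ => ⟨N * M, Nat.mul_pos hN hM, by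
        rw [smul_add, mul_nsmul, mul_nsmul']
        exact add_mem (nsmul_mem ha M) (nsmul_mem hb N)⟩ }
  have hrat : ∀ (q : ℚ) (s : S), (q : ℝ) • (s : E) ∈ D := fun q s => ⟨q.den, q.den_pos, by
    rw [← Nat.cast_smul_eq_nsmul ℝ, smul_smul, ← Rat.cast_natCast, ← Rat.cast_mul,
      mul_comm, Rat.mul_den_eq_num, Rat.cast_intCast, Int.cast_smul_eq_zsmul]
    exact zsmul_mem s.2 _⟩
  have hc : c ∈ closure (Set.range fun q : Fin k → ℚ => fun j => (q j : ℝ)) :=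
    (DenseRange.piMap fun _ => Rat.denseRange_cast (𝕜 := ℝ)).closure_eq ▸ Set.mem_univ c
  refine map_mem_closure (f := fun c : Fin k → ℝ => ∑ j, c j • (s j : E)) (by fun_prop) hc ?_
  rintro _ ⟨q, rfl⟩
  exact sum_mem fun j _ => hrat (q j) (s j)

namespace IsZonotopal

variable {n : ℕ} {L : AddSubgroup (Fin n → ℤ)} {lam x : Fin n → ℝ}

theorem wip_icast_le_cubeSupportFun (hL : IsZonotopal L)
    (hx : ∀ v ∈ L, wip lam x (icast v) ≤ wip lam (icast v) (icast v) / 2) {v : Fin n → ℤ}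
    (hv : v ∈ L) : wip lam x (icast v) ≤ cubeSupportFun lam (icast v) := by
  induction hN : ∑ i, (v i).natAbs using Nat.strong_induction_on generalizing v with
  | _ N ih =>
  rcases eq_or_ne v 0 with rfl | hv0
  · simp [wip, cubeSupportFun, icast]
  obtain ⟨e, he, hsupp, hconf⟩ := hL.exists_conformal_elementary hv hv0
  have hsplit := natAbs_eq_natAbs_add_natAbs_sub he.2.2.1 hsupp hconf
  have hlt : ∑ i, ((v - e) i).natAbs < N := by
    obtain ⟨i, hi⟩ := Function.ne_iff.1 he.2.1
    rw [← hN, ← add_lt_add_iff_left (∑ i, (e i).natAbs), ← sum_add_distrib,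
      sum_congr rfl fun i _ => (hsplit i).symm, lt_add_iff_pos_left]
    exact sum_pos' (fun _ _ => Nat.zero_le _) ⟨i, mem_univ i, Int.natAbs_pos.2 hi⟩
  calc wip lam x (icast v) = wip lam x (icast e) + wip lam x (icast (v - e)) := by
        rw [← wip_add_right]; congr; ext; simp [icast]
    _ ≤ cubeSupportFun lam (icast e) + cubeSupportFun lam (icast (v - e)) :=
        add_le_add ((hx e he.1).trans_eq (cubeSupportFun_icast_eq_wip he.2.2.1).symm)
          (ih _ hlt (sub_mem hv he.1) rfl)
    _ = cubeSupportFun lam (icast v) := (cubeSupportFun_icast_eq_add hsplit).symm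

theorem wip_le_cubeSupportFun (hL : IsZonotopal L)
    (hx : ∀ v ∈ L, wip lam x (icast v) ≤ wip lam (icast v) (icast v) / 2) {p : Fin n → ℝ}
    (hp : p ∈ latticeSpan L) : wip lam x p ≤ cubeSupportFun lam p := by
  let S : AddSubgroup (Fin n → ℝ) := L.map ((Int.castAddHom ℝ).compLeft (Fin n))
  have hclosed : IsClosed {p | wip lam x p ≤ cubeSupportFun lam p} :=
    isClosed_le (continuous_wip_right lam x) (continuous_cubeSupportFun lam)
  refine hclosed.closure_subset_iff.2 ?_ (span_real_subset_closure_nsmul_mem S hp)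
  rintro u ⟨N, hN, v, hv, hvu⟩
  have := hL.wip_icast_le_cubeSupportFun hx hv
  rw [show icast v = (N : ℝ) • u from hvu.trans (Nat.cast_smul_eq_nsmul ℝ N u).symm,
    wip_smul_right, cubeSupportFun_smul _ _ N.cast_nonneg] at this
  exact le_of_mul_le_mul_left this (Nat.cast_pos.2 hN)

theorem DV_eq (hL : IsZonotopal L) (hlam : ∀ i, 0 ≤ lam i) :
    DV L lam = {x | x ∈ latticeSpan L ∧ ∀ p ∈ latticeSpan L, wip lam x p ≤ cubeSupportFun lam p} :=
  Set.ext fun _ => ⟨fun ⟨hxF, hx⟩ => ⟨hxF, fun _ hp => hL.wip_le_cubeSupportFun hx hp⟩,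
    fun ⟨hxF, hx⟩ => ⟨hxF, fun v hv =>
      (hx _ (Submodule.subset_span ⟨v, hv, rfl⟩)).trans (cubeSupportFun_icast_le hlam v)⟩⟩

end IsZonotopal

/-- The Dirichlet-Voronoi polytope of a zonotopal lattice `L` (for a
weighted inner product) is the image of the cube `[-1/2, 1/2]ⁿ` under the orthogonal
projection `π` onto the real span of `L`; in particular it is a zonotope. -/
theorem DV_eq_proj_cube {n : ℕ} (L : AddSubgroup (Fin n → ℤ)) (hL : IsZonotopal L)
    (lam : Fin n → ℝ) (hlam : ∀ i, 0 < lam i)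
    (proj : (Fin n → ℝ) →ₗ[ℝ] (Fin n → ℝ))
    (hmem : ∀ z, proj z ∈ latticeSpan L)
    (horth : ∀ z, ∀ w ∈ latticeSpan L, wip lam (z - proj z) w = 0) :
    DV L lam = proj '' {z | ∀ i, |z i| ≤ 1/2} := by
  rw [hL.DV_eq fun i => (hlam i).le, IsWipOrthogonalProjection.image_cube_eq ⟨hmem, horth⟩ hlam]
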